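/- arXiv:1811.11911 — 2 statements merged into one kernel-verified Lean document; each statement's English description precedes it below -/
import Mathlib

section
/- Any network-level trace of interactions that a collection of clients can observe when communicating with the swap-server implementation model over a TCP-like network could also have been produced by the linear specification. Formally, the implementation model network-refines the linear specification: for every network trace tr, if there exists a server-side trace ts of impl_model with network_reordered ts tr, then there exists a server-side trace ds of linear_spec with network_reordered ds tr. -/
/-! ## Interaction trees -/

/-- Node shapes of an interaction tree over event signature `E` with result type `R`. -/
inductive ITreeShape (E : Type → Type) (R : Type) : Type 1
  | ret (r : R) : ITreeShape E R
  | tau : ITreeShape E R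
  | vis (X : Type) (e : E X) : ITreeShape E R

/-- The polynomial functor whose final coalgebra is the type of interaction trees. -/
def ITreeF (E : Type → Type) (R : Type) : PFunctor.{1, 1} :=
  ⟨ITreeShape E R, fun s =>
    match s with
    | .ret _ => PEmpty
    | .tau => PUnit
    | .vis X _ => ULift X⟩

/-- Interaction trees: the coinductive type with constructors `Ret`, `Tau` and `Vis`,
realized as the M-type (final coalgebra) of `ITreeF E R`. -/
def ITree (E : Type → Type) (R : Type) : Type 1 :=
  (ITreeF E R).M

namespace ITree

variable {E : Type → Type} {A B R S : Type}

/-- `Ret r`: the computation that halts returning `r`. -/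
def ret (r : R) : ITree E R :=
  PFunctor.M.mk ⟨ITreeShape.ret r, fun x => PEmpty.elim x⟩

/-- `Tau t`: a silent internal step followed by `t`. -/
def tau (t : ITree E R) : ITree E R :=
  PFunctor.M.mk ⟨ITreeShape.tau, fun _ => t⟩

/-- `Vis e k`: a visible event `e` awaiting an answer `x : X`, continuing as `k x`. -/
def vis {X : Type} (e : E X) (k : X → ITree E R) : ITree E R :=
  PFunctor.M.mk ⟨ITreeShape.vis X e, fun x => k x.down⟩

/-- Monadic bind: corecursively grafts `k r` at each leaf `Ret r`. -/
def bind (t : ITree E A) (k : A → ITree E R) : ITree E R :=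
  PFunctor.M.corec
    (fun s =>
      match s with
      | Sum.inl t' =>
        match PFunctor.M.dest t' with
        | ⟨ITreeShape.ret a, _⟩ =>
          match PFunctor.M.dest (k a) with
          | ⟨sh, ch⟩ => ⟨sh, fun b => Sum.inr (ch b)⟩
        | ⟨ITreeShape.tau, ch⟩ => ⟨ITreeShape.tau, fun b => Sum.inl (ch b)⟩
        | ⟨ITreeShape.vis X e, ch⟩ => ⟨ITreeShape.vis X e, fun b => Sum.inl (ch b)⟩
      | Sum.inr u =>
        match PFunctor.M.dest u with
        | ⟨sh, ch⟩ => ⟨sh, fun b => Sum.inr (ch b)⟩)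
    (Sum.inl t : ITree E A ⊕ ITree E R)

instance : Monad (ITree E) where
  pure := ret
  bind := bind

/-- Perform a single event and return its answer. -/
def trigger {X : Type} (e : E X) : ITree E X :=
  vis e ret

/-- The silently diverging tree: `spin = Tau spin`. -/
def spin : ITree E R :=
  PFunctor.M.corec (fun _ : PUnit.{2} => ⟨ITreeShape.tau, fun _ => PUnit.unit⟩) PUnit.unit

/-- Iterate a body `step` forever (a `CoFixpoint` loop threading a state `s : S`). -/
def loop (step : S → ITree E S) (s₀ : S) : ITree E Unit :=
  PFunctor.M.corec
    (fun t : ITree E S =>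
      match PFunctor.M.dest t with
      | ⟨ITreeShape.ret s, _⟩ => ⟨ITreeShape.tau, fun _ => step s⟩
      | ⟨ITreeShape.tau, ch⟩ => ⟨ITreeShape.tau, fun b => ch b⟩
      | ⟨ITreeShape.vis X e, ch⟩ => ⟨ITreeShape.vis X e, fun b => ch b⟩)
    (step s₀)

/-! ## Equivalence up to Tau (weak bisimulation) -/

/-- `Untaus t u`: `u` is obtained from `t` by removing finitely many leading `Tau`
nodes, and `u` does not itself start with a `Tau`. -/
inductive Untaus : ITree E R → ITree E R → Prop
  | base {t : ITree E R} (h : ∀ t', t ≠ tau t') : Untaus t t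
  | step {t u : ITree E R} (h : Untaus t u) : Untaus (tau t) u

/-- `t` converges to a non-`Tau` node after finitely many leading `Tau`s. -/
def FiniteTaus (t : ITree E R) : Prop := ∃ t', Untaus t t'

/-- Two trees with no leading `Tau` match up to `Rel`: both are the same `Ret`,
or both are `Vis` of the same event with continuations pointwise related by `Rel`. -/
def EqHead (Rel : ITree E R → ITree E R → Prop) (t u : ITree E R) : Prop :=
  (∃ r : R, t = ret r ∧ u = ret r) ∨
  (∃ (X : Type) (e : E X) (k k' : X → ITree E R),
      t = vis e k ∧ u = vis e k' ∧ ∀ x : X, Rel (k x) (k' x))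

/-- `Rel` is a weak bisimulation. -/
def IsEuttRel (Rel : ITree E R → ITree E R → Prop) : Prop :=
  ∀ t u, Rel t u →
    (FiniteTaus t ↔ FiniteTaus u) ∧
    (∀ t' u', Untaus t t' → Untaus u u' → EqHead Rel t' u')

/-- Equivalence up to `Tau`: the greatest weak bisimulation. -/
def Eutt (t u : ITree E R) : Prop :=
  ∃ Rel, IsEuttRel Rel ∧ Rel t u

/-! ## Traces -/

/-- An event together with the environment's answer. -/
structure EventE (E : Type → Type) : Type 1 where
  X : Type
  e : E X
  ans : X

/-- `IsTrace t tr r?` holds when `tr` lists, in order, the `Vis` events (with answers)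
along a finite `Tau`-skipping path of `t`, with `r? = some r` if the path ends at
`Ret r` and `none` otherwise. -/
inductive IsTrace : ITree E R → List (EventE E) → Option R → Prop
  | nil (t : ITree E R) : IsTrace t [] none
  | retEnd (r : R) : IsTrace (ITree.ret r) [] (some r)
  | tauStep {t : ITree E R} {tr r?} : IsTrace t tr r? → IsTrace (ITree.tau t) tr r?
  | visStep {X : Type} (e : E X) (x : X) {k : X → ITree E R} {tr r?} :
      IsTrace (k x) tr r? → IsTrace (ITree.vis e k) (⟨X, e, x⟩ :: tr) r?

/-- Trace refinement: every trace of `t` (with its optional result) is a trace of `u`. -/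
def Refines (t u : ITree E R) : Prop :=
  ∀ tr r?, IsTrace t tr r? → IsTrace u tr r?

end ITree
/-! ## The swap server and its network model -/

/-- Connection identifiers. -/
abbrev ConnectionId := ℕ

/-- Bytes. -/
abbrev Byte := UInt8

/-- The fixed size of swap messages. -/
def msgLen : ℕ := 1024

/-- Fixed-size messages. -/
def Message : Type := { l : List Byte // l.length = msgLen }

/-- The all-zeros message (the server's initial stored message). -/
def zeros : Message := ⟨List.replicate msgLen 0, by simp⟩

/-- Events observable over the network. -/
inductive NetworkEvent : Type
  | NewConnection (c : ConnectionId)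
  | ToServer (c : ConnectionId) (b : Byte)
  | FromServer (c : ConnectionId) (b : Byte)

/-- Network traces. -/
abbrev NetworkTrace := List NetworkEvent

/-- Status of a connection in the network. -/
inductive ConnectionStatus : Type
  | CLOSED
  | PENDING
  | ACCEPTED
  deriving DecidableEq

/-- Per-connection network state: a status and two FIFO buffers of in-flight bytes. -/
structure ConnectionNetState : Type where
  status : ConnectionStatus
  /-- bytes in flight from the client to the server -/
  toServer : List Byte
  /-- bytes in flight from the server to the client -/
  fromServer : List Byte

/-- A network state assigns to each connection a status and in-flight buffers. -/
def NetworkState : Type := ConnectionId → ConnectionNetState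

/-- The initial network state: all connections `CLOSED` with empty buffers. -/
def initial_ns : NetworkState := fun _ => ⟨ConnectionStatus.CLOSED, [], []⟩

/-- Update the state of one connection. -/
def updateNs (ns : NetworkState) (c : ConnectionId) (cs : ConnectionNetState) : NetworkState :=
  fun c' => if c' = c then cs else ns c'

/-- Labeled transitions of the network performed by the server:
accepting a pending connection, receiving from the head of the incoming buffer
(possible while `PENDING` or `ACCEPTED`), or emitting a byte (only on an
`ACCEPTED` connection, appended to the outgoing buffer). -/
def server_transition (ev : NetworkEvent) (ns ns' : NetworkState) : Prop :=
  match ev with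
  | NetworkEvent.NewConnection c =>
      (ns c).status = ConnectionStatus.PENDING ∧
      ns' = updateNs ns c { ns c with status := ConnectionStatus.ACCEPTED }
  | NetworkEvent.ToServer c b =>
      ((ns c).status = ConnectionStatus.PENDING ∨ (ns c).status = ConnectionStatus.ACCEPTED) ∧
      ∃ rest, (ns c).toServer = b :: rest ∧
        ns' = updateNs ns c { ns c with toServer := rest }
  | NetworkEvent.FromServer c b =>
      (ns c).status = ConnectionStatus.ACCEPTED ∧
      ns' = updateNs ns c { ns c with fromServer := (ns c).fromServer ++ [b] }

/-- Labeled transitions of the network performed by clients: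
opening a closed connection (making it `PENDING`), sending a byte
(appended to the incoming buffer), or receiving a byte from the head of the
outgoing buffer. -/
def client_transition (ev : NetworkEvent) (ns ns' : NetworkState) : Prop :=
  match ev with
  | NetworkEvent.NewConnection c =>
      (ns c).status = ConnectionStatus.CLOSED ∧
      ns' = updateNs ns c { ns c with status := ConnectionStatus.PENDING }
  | NetworkEvent.ToServer c b =>
      ((ns c).status = ConnectionStatus.PENDING ∨ (ns c).status = ConnectionStatus.ACCEPTED) ∧
      ns' = updateNs ns c { ns c with toServer := (ns c).toServer ++ [b] }
  | NetworkEvent.FromServer c b =>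
      (ns c).status = ConnectionStatus.ACCEPTED ∧
      ∃ rest, (ns c).fromServer = b :: rest ∧
        ns' = updateNs ns c { ns c with fromServer := rest }

/-- `network_reordered_ ns ts tc` holds iff, starting from state `ns`, there is an
interleaved execution of the network consisting of server transitions labeled, in
order, by `ts` and client transitions labeled, in order, by `tc`. -/
inductive network_reordered_ : NetworkState → NetworkTrace → NetworkTrace → Prop
  | nil (ns : NetworkState) : network_reordered_ ns [] []
  | server {ns ns' : NetworkState} {ev : NetworkEvent} {ts tc : NetworkTrace} :
      server_transition ev ns ns' → network_reordered_ ns' ts tc →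
      network_reordered_ ns (ev :: ts) tc
  | client {ns ns' : NetworkState} {ev : NetworkEvent} {ts tc : NetworkTrace} :
      client_transition ev ns ns' → network_reordered_ ns' ts tc →
      network_reordered_ ns ts (ev :: tc)

/-- Reordering by the network, starting from the initial (all-`CLOSED`) state. -/
def network_reordered (ts tc : NetworkTrace) : Prop :=
  network_reordered_ initial_ns ts tc

/-- The server side takes the sequence of steps labeled by `tr` from `ns` to `ns'`. -/
inductive server_transitions : NetworkTrace → NetworkState → NetworkState → Prop
  | nil (ns : NetworkState) : server_transitions [] ns ns
  | cons {ev : NetworkEvent} {tr : NetworkTrace} {ns ns' ns'' : NetworkState} :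
      server_transition ev ns ns' → server_transitions tr ns' ns'' →
      server_transitions (ev :: tr) ns ns''

/-! ### The linear specification -/

/-- Events of the linear specification: observing a new connection, a complete
message sent to the server, a complete message sent back by the server, and
(binary) nondeterministic choice. -/
inductive SpecE : Type → Type
  | obs_connect : SpecE ConnectionId
  | obs_msg_to_server (c : ConnectionId) : SpecE Message
  | obs_msg_from_server (c : ConnectionId) (msg : Message) : SpecE Unit
  | or : SpecE Bool

/-- Binary nondeterministic choice for specification trees. -/
def specOr {A : Type} (t u : ITree SpecE A) : ITree SpecE A :=
  ITree.vis SpecE.or (fun b => if b then t else u)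

/-- Nondeterministically choose an element of a list (built from binary choice). -/
def specChoose {A : Type} : List A → ITree SpecE A
  | [] => ITree.spin
  | x :: xs => specOr (ITree.ret x) (specChoose xs)

/-- One step of the linear specification: either accept a new connection, or pick
an open connection, receive a message on it, send back the last stored message,
and store the received one. -/
def specStep : List ConnectionId × Message → ITree SpecE (List ConnectionId × Message) :=
  fun st =>
    let conns := st.1
    let last_msg := st.2
    specOr
      (ITree.bind (ITree.trigger SpecE.obs_connect) fun c =>
        ITree.ret (c :: conns, last_msg))
      (ITree.bind (specChoose conns) fun c =>
        ITree.bind (ITree.trigger (SpecE.obs_msg_to_server c)) fun msg =>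
          ITree.bind (ITree.trigger (SpecE.obs_msg_from_server c last_msg)) fun _ =>
            ITree.ret (conns, msg))

/-- The linear specification, parameterized by the open connections and last message. -/
def linear_spec' (conns : List ConnectionId) (last_msg : Message) : ITree SpecE Unit :=
  ITree.loop specStep (conns, last_msg)

/-- The linear specification of the swap server. -/
def linear_spec : ITree SpecE Unit := linear_spec' [] zeros

/-! ### The implementation model -/

/-- Events of the implementation model: accepting a connection (possibly failing),
receiving a byte on a connection, sending a byte on a connection, and (binary)
nondeterministic choice. -/
inductive ImplE : Type → Type
  | accept : ImplE (Option ConnectionId)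
  | recv_byte (c : ConnectionId) : ImplE Byte
  | send_byte (c : ConnectionId) (b : Byte) : ImplE Unit
  | or : ImplE Bool

/-- Binary nondeterministic choice for implementation trees. -/
def implOr {A : Type} (t u : ITree ImplE A) : ITree ImplE A :=
  ITree.vis ImplE.or (fun b => if b then t else u)

/-- Nondeterministically choose an element of a list (built from binary choice). -/
def implChoose {A : Type} : List A → ITree ImplE A
  | [] => ITree.spin
  | x :: xs => implOr (ITree.ret x) (implChoose xs)

/-- Receive one byte on connection `c`. -/
def recv_byte (c : ConnectionId) : ITree ImplE Byte :=
  ITree.trigger (ImplE.recv_byte c)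

/-- Receive exactly `n` bytes on connection `c`. -/
def recv_bytes (c : ConnectionId) : ℕ → ITree ImplE (List Byte)
  | 0 => ITree.ret []
  | n + 1 =>
      ITree.bind (recv_byte c) fun b =>
        ITree.bind (recv_bytes c n) fun bs => ITree.ret (b :: bs)

/-- Send the bytes `bs` on connection `c`. -/
def send_bytes (c : ConnectionId) : List Byte → ITree ImplE Unit
  | [] => ITree.ret ()
  | b :: bs => ITree.bind (ITree.trigger (ImplE.send_byte c b)) fun _ => send_bytes c bs

/-- Per-connection state machine states of the server. -/
inductive ConnState : Type
  | RECVING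
  | SENDING
  | DELETED
  deriving DecidableEq

/-- A connection structure of the server: an id, a state, and receive/send buffers. -/
structure Connection : Type where
  conn_id : ConnectionId
  state : ConnState
  recvBuf : List Byte
  sendBuf : List Byte

/-- Whether a connection structure is in state `st`. -/
def has_conn_state (st : ConnState) (c : Connection) : Bool :=
  decide (c.state = st)

/-- Replace, in `l`, every element satisfying `p` by `c'`. -/
def replace_when (p : Connection → Bool) (c' : Connection) (l : List Connection) :
    List Connection :=
  l.map fun x => if p x then c' else x

/-- Service one connection: a `RECVING` connection receives some bytes into its
buffer and, upon completing a fixed-size message, swaps it with the stored message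
and moves to `SENDING`; a `SENDING` connection sends some prefix of its send
buffer, reverting to `RECVING` once the buffer is empty. -/
def process_conn (c : Connection) (last_full_msg : Message) :
    ITree ImplE (Connection × Message) :=
  match c.state with
  | ConnState.RECVING =>
      ITree.bind (implChoose (List.range (msgLen - c.recvBuf.length + 1))) fun n =>
        ITree.bind (recv_bytes c.conn_id n) fun bs =>
          let buf' := c.recvBuf ++ bs
          if h : buf'.length = msgLen then
            ITree.ret
              ({ c with state := ConnState.SENDING, recvBuf := [],
                        sendBuf := last_full_msg.1 },
               ⟨buf', h⟩)
          else
            ITree.ret ({ c with recvBuf := buf' }, last_full_msg)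
  | ConnState.SENDING =>
      ITree.bind (implChoose (List.range (c.sendBuf.length + 1))) fun n =>
        ITree.bind (send_bytes c.conn_id (c.sendBuf.take n)) fun _ =>
          let rest := c.sendBuf.drop n
          if rest.isEmpty then
            ITree.ret ({ c with state := ConnState.RECVING, sendBuf := [] }, last_full_msg)
          else
            ITree.ret ({ c with sendBuf := rest }, last_full_msg)
  | ConnState.DELETED => ITree.ret (c, last_full_msg)

/-- Accept a new connection (the environment may refuse). -/
def accept_connection : ITree ImplE (Option Connection) :=
  ITree.bind (ITree.trigger ImplE.accept) fun r =>
    match r with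
    | some cid => ITree.ret (some ⟨cid, ConnState.RECVING, [], []⟩)
    | none => ITree.ret none

/-- Body of the main loop of the implementation model: either accept a new
connection, or choose a `RECVING` or `SENDING` connection and service it. -/
def select_loop_body (server_st : List Connection × Message) :
    ITree ImplE (List Connection × Message) :=
  let conns := server_st.1
  let last_full_msg := server_st.2
  implOr
    (ITree.bind accept_connection fun r =>
      match r with
      | some c => ITree.ret (c :: conns, last_full_msg)
      | none => ITree.ret (conns, last_full_msg))
    (ITree.bind
      (implChoose
        (conns.filter (has_conn_state ConnState.RECVING) ++
         conns.filter (has_conn_state ConnState.SENDING))) fun c =>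
      ITree.bind (process_conn c last_full_msg) fun new_st =>
        let c' := new_st.1
        let last_full_msg' := new_st.2
        let conns' :=
          replace_when
            (fun x =>
              if has_conn_state ConnState.RECVING x || has_conn_state ConnState.SENDING x
              then decide (x.conn_id = c'.conn_id)
              else false)
            c' conns
        ITree.ret (conns', last_full_msg'))

/-- The implementation model: iterate `select_loop_body` forever from the empty
connection list and the all-zeros stored message. -/
def impl_model : ITree ImplE Unit :=
  ITree.loop select_loop_body ([], zeros)

/-! ### Converting ITree traces to network traces -/

/-- The evident conversion of specification events (with answers) to network events. -/
def specEventToNet : ITree.EventE SpecE → List NetworkEvent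
  | ⟨_, SpecE.obs_connect, c⟩ => [NetworkEvent.NewConnection c]
  | ⟨_, SpecE.obs_msg_to_server c, msg⟩ => msg.1.map (NetworkEvent.ToServer c)
  | ⟨_, SpecE.obs_msg_from_server c msg, _⟩ => msg.1.map (NetworkEvent.FromServer c)
  | ⟨_, SpecE.or, _⟩ => []

/-- The evident conversion of implementation events (with answers) to network events. -/
def implEventToNet : ITree.EventE ImplE → List NetworkEvent
  | ⟨_, ImplE.accept, some c⟩ => [NetworkEvent.NewConnection c]
  | ⟨_, ImplE.accept, none⟩ => []
  | ⟨_, ImplE.recv_byte c, b⟩ => [NetworkEvent.ToServer c b]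
  | ⟨_, ImplE.send_byte c b, _⟩ => [NetworkEvent.FromServer c b]
  | ⟨_, ImplE.or, _⟩ => []

/-- `tr` is a network trace of the specification tree `spec`. -/
def is_spec_trace (spec : ITree SpecE Unit) (tr : NetworkTrace) : Prop :=
  ∃ (etr : List (ITree.EventE SpecE)) (r? : Option Unit),
    ITree.IsTrace spec etr r? ∧ tr = (etr.map specEventToNet).flatten

/-- `tr` is a network trace of the implementation tree `impl`. -/
def is_impl_trace (impl : ITree ImplE Unit) (tr : NetworkTrace) : Prop :=
  ∃ (etr : List (ITree.EventE ImplE)) (r? : Option Unit),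
    ITree.IsTrace impl etr r? ∧ tr = (etr.map implEventToNet).flatten

/-! ### The step-indexed refinement relation -/

/-- The reasoning state: the current network state, the remaining specification
tree, and bookkeeping of the bytes received so far on each connection. -/
structure SState : Type 1 where
  get_ns : NetworkState
  get_spec : ITree SpecE Unit
  get_inbytes : ConnectionId → List Byte

/-- Functional update of the network-state component. -/
def set_ns (ns : NetworkState) (s : SState) : SState := { s with get_ns := ns }

/-- Functional update of the specification component. -/
def set_spec (spec : ITree SpecE Unit) (s : SState) : SState := { s with get_spec := spec }

/-- Status of connection `c` in the network-state component of `s`. -/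
def get_status (s : SState) (c : ConnectionId) : ConnectionStatus :=
  (s.get_ns c).status

/-- Append `bs` to the record of bytes received from connection `c`. -/
def append_inbytes (c : ConnectionId) (bs : List Byte) (s : SState) : SState :=
  { s with get_inbytes := fun c' => if c' = c then s.get_inbytes c' ++ bs else s.get_inbytes c' }

/-- `tr` is an implementation trace of `impl` of at most `z` observable steps,
relative to the reasoning state `s`. -/
def is_impl_trace_ (z : ℕ) (_s : SState) (impl : ITree ImplE Unit) (tr : NetworkTrace) :
    Prop :=
  is_impl_trace impl tr ∧ tr.length ≤ z

/-- The generalized (step-indexed) network-refinement relation. -/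
def nrefines_ (z : ℕ) (s : SState) (impl : ITree ImplE Unit) : Prop :=
  ∀ tr, is_impl_trace_ z s impl tr →
    ∃ dstr : NetworkTrace,
      network_reordered_ s.get_ns dstr tr ∧ is_spec_trace s.get_spec dstr


/-! The implementation is abstracted to a server machine that takes one step per network event:
receiving or sending a block of bytes is replayed byte by byte, so every trace of `impl_model` is a
run of this machine. The specification then simulates the machine against a shifted network state:
bytes the server has received but not yet assembled into a message are, for the specification,
still in flight to the server, and the reply the server has begun to send is already entirely in
flight to the client. Clients act on the other ends of these buffers, so their steps carry over
unchanged. An accept is answered by `obs_connect`, and the byte completing a message by a whole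
exchange of the specification, which consumes the message and emits the stored reply; every other
server step is invisible to the specification. -/

namespace ITree

variable {E : Type → Type} {A R S : Type}

theorem eq_of_dest_eq {t u : ITree E R} (h : PFunctor.M.dest t = PFunctor.M.dest u) : t = u := by
  rw [← PFunctor.M.mk_dest t, ← PFunctor.M.mk_dest u, h]

theorem eq_ret_or_eq_tau_or_eq_vis (t : ITree E R) :
    (∃ r, t = ret r) ∨ (∃ t', t = tau t') ∨
      ∃ (X : Type) (e : E X) (k : X → ITree E R), t = vis e k := by
  rw [← PFunctor.M.mk_dest t]
  rcases PFunctor.M.dest t with ⟨s, ch⟩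
  cases s with
  | ret r => exact .inl ⟨r, congrArg PFunctor.M.mk (Sigma.ext rfl (heq_of_eq (funext nofun)))⟩
  | tau => exact .inr (.inl ⟨ch PUnit.unit, rfl⟩)
  | vis X e => exact .inr (.inr ⟨X, e, fun x => ch ⟨x⟩, rfl⟩)

theorem tau_injective : Function.Injective (tau : ITree E R → ITree E R) := fun _ _ h => by
  injection PFunctor.M.mk_inj h with _ h
  exact congrFun h PUnit.unit

theorem vis_inj {X X' : Type} {e : E X} {e' : E X'} {k : X → ITree E R} {k' : X' → ITree E R}
    (h : vis e k = vis e' k') : X = X' ∧ HEq e e' ∧ HEq k k' := by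
  injection PFunctor.M.mk_inj h with h₁ h₂
  injection h₁ with hX he
  subst hX
  exact ⟨rfl, he, heq_of_eq (funext fun x => congrFun (eq_of_heq h₂) ⟨x⟩)⟩

theorem ret_ne_tau (r : R) (t : ITree E R) : ret r ≠ tau t := fun h => by
  cases congrArg (fun u => (PFunctor.M.dest u).1) h

theorem ret_ne_vis {X : Type} (r : R) (e : E X) (k : X → ITree E R) : ret r ≠ vis e k :=
  fun h => by cases congrArg (fun u => (PFunctor.M.dest u).1) h

theorem tau_ne_vis {X : Type} (t : ITree E R) (e : E X) (k : X → ITree E R) : tau t ≠ vis e k :=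
  fun h => by cases congrArg (fun u => (PFunctor.M.dest u).1) h


theorem isTrace_cases {t : ITree E R} {tr r?} (h : IsTrace t tr r?) :
    (tr = [] ∧ r? = none) ∨ (∃ r, t = ret r ∧ tr = [] ∧ r? = some r) ∨
      (∃ t', t = tau t' ∧ IsTrace t' tr r?) ∨
      ∃ (X : Type) (e : E X) (x : X) (k : X → ITree E R) (tr' : List (EventE E)),
        t = vis e k ∧ tr = ⟨X, e, x⟩ :: tr' ∧ IsTrace (k x) tr' r? := by
  cases h with
  | nil => exact .inl ⟨rfl, rfl⟩
  | retEnd r => exact .inr (.inl ⟨r, rfl, rfl, rfl⟩)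
  | tauStep h => exact .inr (.inr (.inl ⟨_, rfl, h⟩))
  | visStep e x h => exact .inr (.inr (.inr ⟨_, e, x, _, _, rfl, rfl, h⟩))

theorem isTrace_ret {r : R} {tr r?} (h : IsTrace (ret (E := E) r) tr r?) :
    tr = [] ∧ ∀ a ∈ r?, a = r := by
  rcases isTrace_cases h with ⟨rfl, rfl⟩ | ⟨r', he, rfl, rfl⟩ | ⟨_, he, _⟩ | ⟨_, _, _, _, _, he, _⟩
  · simp
  · injection PFunctor.M.mk_inj he with he
    injection he with he
    simp [he]
  · exact absurd he (ret_ne_tau _ _)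
  · exact absurd he (ret_ne_vis _ _ _)

theorem isTrace_vis {X : Type} {e : E X} {k : X → ITree E R} {tr r?}
    (h : IsTrace (vis e k) tr r?) :
    (tr = [] ∧ r? = none) ∨ ∃ (x : X) (tr' : List (EventE E)),
      tr = ⟨X, e, x⟩ :: tr' ∧ IsTrace (k x) tr' r? := by
  rcases isTrace_cases h with h | ⟨_, he, _⟩ | ⟨_, he, _⟩ | ⟨_, _, x, _, tr', he, rfl, h⟩
  · exact .inl h
  · exact absurd he.symm (ret_ne_vis _ _ _)
  · exact absurd he.symm (tau_ne_vis _ _ _)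
  · obtain ⟨rfl, he, hk⟩ := vis_inj he
    cases he
    cases hk
    exact .inr ⟨x, tr', rfl, h⟩

theorem isTrace_trigger {X : Type} {e : E X} {tr r?} (h : IsTrace (trigger e) tr r?) :
    (tr = [] ∧ r? = none) ∨ ∃ x, tr = [⟨X, e, x⟩] ∧ ∀ a ∈ r?, a = x := by
  rcases isTrace_vis h with h | ⟨x, tr', rfl, hk⟩
  · exact .inl h
  · obtain ⟨rfl, hr⟩ := isTrace_ret hk
    exact .inr ⟨x, rfl, hr⟩

theorem isTrace_trigger_some {X : Type} (e : E X) (x : X) :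
    IsTrace (trigger e) [⟨X, e, x⟩] (some x) :=
  .visStep e x (.retEnd x)

theorem spin_eq_tau : spin (E := E) (R := R) = tau spin :=
  eq_of_dest_eq (PFunctor.M.dest_corec _ _)

theorem isTrace_spin {tr r?} (h : IsTrace (spin : ITree E R) tr r?) : tr = [] ∧ r? = none := by
  generalize hs : (spin : ITree E R) = t at h
  induction h with
  | nil => exact ⟨rfl, rfl⟩
  | retEnd => exact absurd (hs.symm.trans spin_eq_tau) (ret_ne_tau _ _)
  | tauStep _ ih => exact ih (tau_injective (spin_eq_tau.symm.trans hs))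
  | visStep => exact absurd (spin_eq_tau.symm.trans hs) (tau_ne_vis _ _ _)

theorem IsTrace.forget_result {t : ITree E R} {tr r?} (h : IsTrace t tr r?) :
    IsTrace t tr none := by
  induction h with
  | nil => exact .nil _
  | retEnd r => exact .nil _
  | tauStep _ ih => exact .tauStep ih
  | visStep e x _ ih => exact .visStep e x ih

/-- `bind t k` unfolds to `PFunctor.M.corec (bindF k) (Sum.inl t)`. -/
def bindF (k : A → ITree E R) :
    (ITree E A ⊕ ITree E R) → (ITreeF E R).Obj (ITree E A ⊕ ITree E R) := fun s =>
  match s with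
  | Sum.inl t' =>
    match PFunctor.M.dest t' with
    | ⟨ITreeShape.ret a, _⟩ =>
      match PFunctor.M.dest (k a) with
      | ⟨sh, ch⟩ => ⟨sh, fun b => Sum.inr (ch b)⟩
    | ⟨ITreeShape.tau, ch⟩ => ⟨ITreeShape.tau, fun b => Sum.inl (ch b)⟩
    | ⟨ITreeShape.vis X e, ch⟩ => ⟨ITreeShape.vis X e, fun b => Sum.inl (ch b)⟩
  | Sum.inr u =>
    match PFunctor.M.dest u with
    | ⟨sh, ch⟩ => ⟨sh, fun b => Sum.inr (ch b)⟩

theorem corec_bindF_inr (k : A → ITree E R) (u : ITree E R) :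
    PFunctor.M.corec (bindF k) (Sum.inr u) = u := by
  refine PFunctor.M.bisim (fun x y => x = PFunctor.M.corec (bindF k) (Sum.inr y)) ?_ _ _ rfl
  rintro _ y rfl
  rcases hd : PFunctor.M.dest y with ⟨sh, ch⟩
  refine ⟨sh, fun b => PFunctor.M.corec (bindF k) (Sum.inr (ch b)), ch, ?_, rfl, fun _ => rfl⟩
  have : bindF k (Sum.inr y) = ⟨sh, fun b => Sum.inr (ch b)⟩ := by
    simp only [bindF, hd]
    rfl
  rw [PFunctor.M.dest_corec, this]
  rfl

theorem bind_ret (a : A) (k : A → ITree E R) : bind (ret a) k = k a := by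
  apply eq_of_dest_eq
  have : bindF k (Sum.inl (ret a)) = bindF k (Sum.inr (k a)) := rfl
  change PFunctor.M.dest (PFunctor.M.corec (bindF k) (Sum.inl (ret a))) = _
  rw [PFunctor.M.dest_corec, this, ← PFunctor.M.dest_corec, corec_bindF_inr]

theorem bind_tau (t : ITree E A) (k : A → ITree E R) : bind (tau t) k = tau (bind t k) :=
  eq_of_dest_eq (PFunctor.M.dest_corec _ _)

theorem bind_vis {X : Type} (e : E X) (h : X → ITree E A) (k : A → ITree E R) :
    bind (vis e h) k = vis e (fun x => bind (h x) k) :=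
  eq_of_dest_eq (PFunctor.M.dest_corec _ _)

def loopF (step : S → ITree E S) : ITree E S → (ITreeF E Unit).Obj (ITree E S) := fun t =>
  match PFunctor.M.dest t with
  | ⟨ITreeShape.ret s, _⟩ => ⟨ITreeShape.tau, fun _ => step s⟩
  | ⟨ITreeShape.tau, ch⟩ => ⟨ITreeShape.tau, fun b => ch b⟩
  | ⟨ITreeShape.vis X e, ch⟩ => ⟨ITreeShape.vis X e, fun b => ch b⟩

/-- `loop step s` unfolds to `loopFrom step (step s)`. -/
def loopFrom (step : S → ITree E S) (t : ITree E S) : ITree E Unit :=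
  PFunctor.M.corec (loopF step) t

theorem loopFrom_ret (step : S → ITree E S) (s : S) :
    loopFrom step (ret s) = tau (loop step s) :=
  eq_of_dest_eq (PFunctor.M.dest_corec _ _)

theorem loopFrom_tau (step : S → ITree E S) (t : ITree E S) :
    loopFrom step (tau t) = tau (loopFrom step t) :=
  eq_of_dest_eq (PFunctor.M.dest_corec _ _)

theorem loopFrom_vis {X : Type} (step : S → ITree E S) (e : E X) (k : X → ITree E S) :
    loopFrom step (vis e k) = vis e (fun x => loopFrom step (k x)) :=
  eq_of_dest_eq (PFunctor.M.dest_corec _ _)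


theorem isTrace_bind_of_some {t : ITree E A} {k : A → ITree E R} {a : A} {tr₁ tr₂ r?}
    (h₁ : IsTrace t tr₁ (some a)) (h₂ : IsTrace (k a) tr₂ r?) :
    IsTrace (bind t k) (tr₁ ++ tr₂) r? := by
  generalize ho : some a = o at h₁
  induction h₁ with
  | nil => cases ho
  | retEnd => cases ho; rwa [bind_ret]
  | tauStep _ ih => rw [bind_tau]; exact .tauStep (ih ho)
  | visStep e x _ ih => rw [bind_vis]; exact .visStep e x (ih ho)

theorem isTrace_bind_inv {t : ITree E A} {k : A → ITree E R} {tr r?}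
    (h : IsTrace (bind t k) tr r?) :
    (IsTrace t tr none ∧ r? = none) ∨
      ∃ tr₁ a tr₂, tr = tr₁ ++ tr₂ ∧ IsTrace t tr₁ (some a) ∧ IsTrace (k a) tr₂ r? := by
  generalize hw : bind t k = w at h
  induction h generalizing t with
  | nil => exact .inl ⟨.nil t, rfl⟩
  | retEnd r =>
    rcases eq_ret_or_eq_tau_or_eq_vis t with ⟨a, rfl⟩ | ⟨t', rfl⟩ | ⟨X, e, h, rfl⟩
    · rw [bind_ret] at hw
      exact .inr ⟨[], a, [], rfl, .retEnd a, hw ▸ .retEnd r⟩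
    · exact absurd (hw.symm.trans (bind_tau _ _)) (ret_ne_tau _ _)
    · exact absurd (hw.symm.trans (bind_vis _ _ _)) (ret_ne_vis _ _ _)
  | @tauStep w tr r? hw' ih =>
    rcases eq_ret_or_eq_tau_or_eq_vis t with ⟨a, rfl⟩ | ⟨t', rfl⟩ | ⟨X, e, h, rfl⟩
    · rw [bind_ret] at hw
      exact .inr ⟨[], a, tr, rfl, .retEnd a, hw ▸ .tauStep hw'⟩
    · rw [bind_tau] at hw
      rcases ih (tau_injective hw) with ⟨h₁, rfl⟩ | ⟨tr₁, a, tr₂, rfl, h₁, h₂⟩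
      · exact .inl ⟨.tauStep h₁, rfl⟩
      · exact .inr ⟨tr₁, a, tr₂, rfl, .tauStep h₁, h₂⟩
    · exact absurd ((bind_vis _ _ _).symm.trans hw).symm (tau_ne_vis _ _ _)
  | @visStep X e x k' tr r? hk ih =>
    rcases eq_ret_or_eq_tau_or_eq_vis t with ⟨a, rfl⟩ | ⟨t', rfl⟩ | ⟨X', e', h, rfl⟩
    · rw [bind_ret] at hw
      exact .inr ⟨[], a, _, rfl, .retEnd a, hw ▸ .visStep e x hk⟩
    · exact absurd (hw.symm.trans (bind_tau _ _)) (tau_ne_vis _ _ _).symm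
    · rw [bind_vis] at hw
      obtain ⟨rfl, he, hh⟩ := vis_inj hw
      cases he
      rcases ih (congrFun (eq_of_heq hh) x) with ⟨h₁, rfl⟩ | ⟨tr₁, a, tr₂, rfl, h₁, h₂⟩
      · exact .inl ⟨.visStep _ x h₁, rfl⟩
      · exact .inr ⟨⟨_, _, x⟩ :: tr₁, a, tr₂, rfl, .visStep _ x h₁, h₂⟩

theorem isTrace_bind_ret_inv {t : ITree E A} {f : A → R} {tr r?}
    (h : IsTrace (bind t fun a => ret (f a)) tr r?) :
    ∃ r₀?, IsTrace t tr r₀? ∧ r? = r₀?.map f := by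
  rcases isTrace_bind_inv h with ⟨h₁, rfl⟩ | ⟨tr₁, a, tr₂, rfl, h₁, h₂⟩
  · exact ⟨none, h₁, rfl⟩
  · obtain ⟨rfl, hr⟩ := isTrace_ret h₂
    rw [List.append_nil]
    cases r? with
    | none => exact ⟨none, h₁.forget_result, rfl⟩
    | some b => exact ⟨some a, h₁, by simp [hr b rfl]⟩

inductive IsLoopTrace (step : S → ITree E S) : ITree E S → List (EventE E) → Prop
  | last {u tr} : IsTrace u tr none → IsLoopTrace step u tr
  | iter {u tr₁ s tr₂} :
      IsTrace u tr₁ (some s) → IsLoopTrace step (step s) tr₂ → IsLoopTrace step u (tr₁ ++ tr₂)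

theorem isLoopTrace_of_isTrace_loopFrom {step : S → ITree E S} {u : ITree E S} {tr r?}
    (h : IsTrace (loopFrom step u) tr r?) : IsLoopTrace step u tr := by
  generalize hw : loopFrom step u = w at h
  induction h generalizing u with
  | nil => exact .last (.nil u)
  | retEnd r =>
    rcases eq_ret_or_eq_tau_or_eq_vis u with ⟨s, rfl⟩ | ⟨u', rfl⟩ | ⟨X, e, k, rfl⟩
    · exact absurd (hw.symm.trans (loopFrom_ret _ _)) (ret_ne_tau _ _)
    · exact absurd (hw.symm.trans (loopFrom_tau _ _)) (ret_ne_tau _ _)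
    · exact absurd (hw.symm.trans (loopFrom_vis _ _ _)) (ret_ne_vis _ _ _)
  | tauStep _ ih =>
    rcases eq_ret_or_eq_tau_or_eq_vis u with ⟨s, rfl⟩ | ⟨u', rfl⟩ | ⟨X, e, k, rfl⟩
    · rw [loopFrom_ret] at hw
      simpa using IsLoopTrace.iter (.retEnd s) (ih (u := step s) (tau_injective hw))
    · rw [loopFrom_tau] at hw
      cases ih (tau_injective hw) with
      | last h => exact .last (.tauStep h)
      | iter h₁ h₂ => exact .iter (.tauStep h₁) h₂
    · exact absurd ((loopFrom_vis _ _ _).symm.trans hw).symm (tau_ne_vis _ _ _)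
  | @visStep X e x k' tr r? _ ih =>
    rcases eq_ret_or_eq_tau_or_eq_vis u with ⟨s, rfl⟩ | ⟨u', rfl⟩ | ⟨X', e', k, rfl⟩
    · exact absurd (hw.symm.trans (loopFrom_ret _ _)) (tau_ne_vis _ _ _).symm
    · exact absurd (hw.symm.trans (loopFrom_tau _ _)) (tau_ne_vis _ _ _).symm
    · rw [loopFrom_vis] at hw
      obtain ⟨rfl, he, hk⟩ := vis_inj hw
      cases he
      cases ih (congrFun (eq_of_heq hk) x) with
      | last h => exact .last (.visStep _ x h)
      | iter h₁ h₂ => exact List.cons_append .. ▸ .iter (.visStep _ x h₁) h₂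

theorem isLoopTrace_of_isTrace_loop {step : S → ITree E S} {s : S} {tr r?}
    (h : IsTrace (loop step s) tr r?) : IsLoopTrace step (step s) tr :=
  isLoopTrace_of_isTrace_loopFrom h

theorem isTrace_loopFrom_of_some {step : S → ITree E S} {u : ITree E S} {s : S} {tr₁ tr₂ r?}
    (h₁ : IsTrace u tr₁ (some s)) (h₂ : IsTrace (loop step s) tr₂ r?) :
    IsTrace (loopFrom step u) (tr₁ ++ tr₂) r? := by
  generalize ho : some s = o at h₁
  induction h₁ with
  | nil => cases ho
  | retEnd => cases ho; rw [loopFrom_ret]; exact .tauStep h₂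
  | tauStep _ ih => rw [loopFrom_tau]; exact .tauStep (ih ho)
  | visStep e x _ ih => rw [loopFrom_vis]; exact .visStep e x (ih ho)

theorem isTrace_loop_of_step {step : S → ITree E S} {s s' : S} {tr₁ tr₂ r?}
    (h₁ : IsTrace (step s) tr₁ (some s')) (h₂ : IsTrace (loop step s') tr₂ r?) :
    IsTrace (loop step s) (tr₁ ++ tr₂) r? :=
  isTrace_loopFrom_of_some h₁ h₂

end ITree

def implFlat (etr : List (ITree.EventE ImplE)) : NetworkTrace :=
  (etr.map implEventToNet).flatten

@[simp] theorem implFlat_nil : implFlat [] = [] := rfl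

@[simp] theorem implFlat_cons (e : ITree.EventE ImplE) (etr : List (ITree.EventE ImplE)) :
    implFlat (e :: etr) = implEventToNet e ++ implFlat etr := rfl

@[simp] theorem implFlat_append (etr etr' : List (ITree.EventE ImplE)) :
    implFlat (etr ++ etr') = implFlat etr ++ implFlat etr' := by
  simp [implFlat]

abbrev ServerState := List Connection × Message

/-- The predicate by which `select_loop_body` locates the connection it has just serviced. -/
def liveWithId (cid : ConnectionId) (x : Connection) : Bool :=
  if has_conn_state ConnState.RECVING x || has_conn_state ConnState.SENDING x
  then decide (x.conn_id = cid) else false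

def serviceResult (σ : ServerState) (v : Connection × Message) : ServerState :=
  (replace_when (liveWithId v.1.conn_id) v.1 σ.1, v.2)

def recvUpd (conn : Connection) (bs : List Byte) (m : Message) : Connection × Message :=
  if h : (conn.recvBuf ++ bs).length = msgLen then
    ({ conn with state := ConnState.SENDING, recvBuf := [], sendBuf := m.1 },
      ⟨conn.recvBuf ++ bs, h⟩)
  else ({ conn with recvBuf := conn.recvBuf ++ bs }, m)

def sendUpd (conn : Connection) (n : ℕ) : Connection :=
  if (conn.sendBuf.drop n).isEmpty then { conn with state := ConnState.RECVING, sendBuf := [] }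
  else { conn with sendBuf := conn.sendBuf.drop n }

def newConnection (c : ConnectionId) : Connection := ⟨c, ConnState.RECVING, [], []⟩

/-- The server loop refined to one network event per step: bytes are received and sent one at a
time, and a connection's buffers are updated after each byte. -/
inductive ServerStep : ServerState → NetworkEvent → ServerState → Prop
  | accept (σ : ServerState) (c : ConnectionId) :
      ServerStep σ (.NewConnection c) (newConnection c :: σ.1, σ.2)
  | recv {σ : ServerState} {conn : Connection} (b : Byte) :
      conn ∈ σ.1 → conn.state = .RECVING →
      ServerStep σ (.ToServer conn.conn_id b) (serviceResult σ (recvUpd conn [b] σ.2))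
  | send {σ : ServerState} {conn : Connection} {b : Byte} {rest : List Byte} :
      conn ∈ σ.1 → conn.state = .SENDING → conn.sendBuf = b :: rest →
      ServerStep σ (.FromServer conn.conn_id b) (serviceResult σ (sendUpd conn 1, σ.2))

/-- Servicing a connection without transferring a byte. This is the identity once connection ids
are distinct (`ServerIdleStep.eq`), which only the network guarantees. -/
inductive ServerIdleStep : ServerState → ServerState → Prop
  | recv {σ : ServerState} {conn : Connection} :
      conn ∈ σ.1 → conn.state = .RECVING →
      ServerIdleStep σ (serviceResult σ (recvUpd conn [] σ.2))
  | send {σ : ServerState} {conn : Connection} :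
      conn ∈ σ.1 → conn.state = .SENDING → ServerIdleStep σ (serviceResult σ (sendUpd conn 0, σ.2))

inductive ServerSteps : ServerState → NetworkTrace → ServerState → Prop
  | refl (σ : ServerState) : ServerSteps σ [] σ
  | idle {σ σ' σ'' ts} : ServerIdleStep σ σ' → ServerSteps σ' ts σ'' → ServerSteps σ ts σ''
  | step {σ σ' σ'' ev ts} :
      ServerStep σ ev σ' → ServerSteps σ' ts σ'' → ServerSteps σ (ev :: ts) σ''

theorem ServerSteps.append {σ σ' σ'' ts ts'} (h : ServerSteps σ ts σ')
    (h' : ServerSteps σ' ts' σ'') : ServerSteps σ (ts ++ ts') σ'' := by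
  induction h with
  | refl => exact h'
  | idle hi _ ih => exact .idle hi (ih h')
  | step hs _ ih => exact .step hs (ih h')

theorem liveWithId_self {conn : Connection}
    (h : conn.state = .RECVING ∨ conn.state = .SENDING) : liveWithId conn.conn_id conn = true := by
  rcases h with h | h <;> simp [liveWithId, has_conn_state, h]

theorem mem_replace_when {p : Connection → Bool} {c' x : Connection} {l : List Connection}
    (h : x ∈ l) (hp : p x = true) : c' ∈ replace_when p c' l :=
  List.mem_map.2 ⟨x, h, by simp [hp]⟩

theorem replace_when_replace_when {p : Connection → Bool} {c₁ c₂ : Connection}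
    (l : List Connection) (h : p c₁ = true) :
    replace_when p c₂ (replace_when p c₁ l) = replace_when p c₂ l := by
  simp only [replace_when, List.map_map]
  refine List.map_congr_left fun x _ => ?_
  by_cases hx : p x <;> simp [hx, h]

theorem mem_serviceResult {σ : ServerState} {conn conn' : Connection} (m : Message)
    (hmem : conn ∈ σ.1) (hlive : conn.state = .RECVING ∨ conn.state = .SENDING)
    (hid : conn'.conn_id = conn.conn_id) : conn' ∈ (serviceResult σ (conn', m)).1 :=
  mem_replace_when hmem (hid ▸ liveWithId_self hlive)

theorem serviceResult_serviceResult (σ : ServerState) {conn : Connection} {v : Connection × Message}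
    (m : Message) (hlive : conn.state = .RECVING ∨ conn.state = .SENDING)
    (hid : v.1.conn_id = conn.conn_id) :
    serviceResult (serviceResult σ (conn, m)) v = serviceResult σ v := by
  simp only [serviceResult, hid, replace_when_replace_when _ (liveWithId_self hlive)]

theorem recvUpd_conn_id (conn : Connection) (bs : List Byte) (m : Message) :
    (recvUpd conn bs m).1.conn_id = conn.conn_id := by
  unfold recvUpd; split <;> rfl

theorem sendUpd_conn_id (conn : Connection) (n : ℕ) : (sendUpd conn n).conn_id = conn.conn_id := by
  unfold sendUpd; split <;> rfl

theorem sendUpd_recvBuf (conn : Connection) (n : ℕ) : (sendUpd conn n).recvBuf = conn.recvBuf := by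
  unfold sendUpd; split <;> rfl

theorem sendUpd_sendBuf (conn : Connection) (n : ℕ) :
    (sendUpd conn n).sendBuf = conn.sendBuf.drop n := by
  unfold sendUpd; split
  · next h => exact (List.isEmpty_iff.1 h).symm
  · rfl

theorem recvUpd_snoc (conn : Connection) (b : Byte) (bs : List Byte) (m : Message) :
    recvUpd { conn with recvBuf := conn.recvBuf ++ [b] } bs m = recvUpd conn (b :: bs) m := by
  simp [recvUpd]

theorem sendUpd_succ {conn : Connection} {b : Byte} {rest : List Byte}
    (h : conn.sendBuf = b :: rest) (n : ℕ) :
    sendUpd { conn with sendBuf := rest } n = sendUpd conn (n + 1) := by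
  simp [sendUpd, h]

theorem serverSteps_recv {σ : ServerState} {conn : Connection} (bs : List Byte)
    (hmem : conn ∈ σ.1) (hst : conn.state = .RECVING)
    (hlen : conn.recvBuf.length + bs.length ≤ msgLen ∨ bs = []) :
    ServerSteps σ (bs.map (.ToServer conn.conn_id)) (serviceResult σ (recvUpd conn bs σ.2)) := by
  induction bs generalizing conn σ with
  | nil => exact .idle (.recv hmem hst) (.refl _)
  | cons b bs ih =>
    replace hlen : conn.recvBuf.length + bs.length < msgLen := by
      simp only [List.length_cons, reduceCtorEq, or_false] at hlen; omega
    by_cases hc : (conn.recvBuf ++ [b]).length = msgLen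
    · obtain rfl : bs = [] := List.eq_nil_of_length_eq_zero (by simp at hc; omega)
      exact .step (.recv b hmem hst) (.refl _)
    · let conn₁ : Connection := { conn with recvBuf := conn.recvBuf ++ [b] }
      have hupd : recvUpd conn [b] σ.2 = (conn₁, σ.2) := dif_neg hc
      refine .step (.recv b hmem hst) (hupd ▸ ?_)
      have h : ServerSteps (serviceResult σ (conn₁, σ.2)) (bs.map (.ToServer conn.conn_id))
          (serviceResult (serviceResult σ (conn₁, σ.2)) (recvUpd conn₁ bs σ.2)) :=
        ih (conn := conn₁) (mem_serviceResult _ hmem (.inl hst) rfl) hst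
          (.inl (by simp only [conn₁, List.length_append, List.length_singleton]; omega))
      rwa [recvUpd_snoc,
        serviceResult_serviceResult (conn := conn₁) _ _ (.inl hst) (recvUpd_conn_id conn _ _)] at h

theorem serverSteps_send {σ : ServerState} {conn : Connection} (n : ℕ)
    (hmem : conn ∈ σ.1) (hst : conn.state = .SENDING) :
    ServerSteps σ ((conn.sendBuf.take n).map (.FromServer conn.conn_id))
      (serviceResult σ (sendUpd conn n, σ.2)) := by
  induction n generalizing conn σ with
  | zero => exact .idle (.send hmem hst) (by simpa using .refl _)
  | succ n ih =>
    rcases hb : conn.sendBuf with _ | ⟨b, rest⟩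
    · have : sendUpd conn (n + 1) = sendUpd conn 0 := by simp [sendUpd, hb]
      exact this ▸ .idle (.send hmem hst) (.refl _)
    by_cases hr : rest = []
    · subst hr
      have : sendUpd conn (n + 1) = sendUpd conn 1 := by simp [sendUpd, hb]
      exact this ▸ .step (.send hmem hst hb) (by simpa using .refl _)
    · let conn₁ : Connection := { conn with sendBuf := rest }
      have hupd : sendUpd conn 1 = conn₁ := by simp [sendUpd, hb, hr, conn₁]
      refine .step (.send hmem hst hb) (hupd ▸ ?_)
      have h : ServerSteps (serviceResult σ (conn₁, σ.2))
          ((rest.take n).map (.FromServer conn.conn_id)) (serviceResult (serviceResult σ (conn₁, σ.2)) (sendUpd conn₁ n, σ.2)) :=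
        ih (conn := conn₁) (mem_serviceResult _ hmem (.inr hst) rfl) hst
      rwa [sendUpd_succ hb, serviceResult_serviceResult (conn := conn₁) _ _ (.inr hst)
        (sendUpd_conn_id conn _)] at h

open ITree

theorem isTrace_implChoose {A : Type} {l : List A} {etr r?} (h : IsTrace (implChoose l) etr r?) :
    implFlat etr = [] ∧ ∀ a ∈ r?, a ∈ l := by
  induction l generalizing etr r? with
  | nil => obtain ⟨rfl, rfl⟩ := isTrace_spin h; simp
  | cons x xs ih =>
    rw [implChoose, implOr] at h
    rcases isTrace_vis h with ⟨rfl, rfl⟩ | ⟨_ | _, etr, rfl, hk⟩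
    · simp
    · obtain ⟨hflat, hmem⟩ := ih hk
      exact ⟨by simpa [implEventToNet] using hflat, fun a ha => .tail _ (hmem a ha)⟩
    · obtain ⟨rfl, hr⟩ := isTrace_ret hk
      exact ⟨rfl, fun a ha => hr a ha ▸ .head _⟩

theorem isTrace_recv_bytes {c : ConnectionId} {n : ℕ} {etr r?}
    (h : IsTrace (recv_bytes c n) etr r?) :
    ∃ bs : List Byte, bs.length ≤ n ∧ implFlat etr = bs.map (.ToServer c) ∧ ∀ a ∈ r?, a = bs := by
  induction n generalizing etr r? with
  | zero => obtain ⟨rfl, hr⟩ := isTrace_ret h; exact ⟨[], le_rfl, rfl, hr⟩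
  | succ n ih =>
    rcases isTrace_bind_inv h with ⟨h₁, rfl⟩ | ⟨_, b, etr₂, rfl, h₁, h₂⟩
    · rcases isTrace_trigger h₁ with ⟨rfl, -⟩ | ⟨b, rfl, -⟩
      · exact ⟨[], by simp, rfl, by simp⟩
      · exact ⟨[b], by simp, by simp [implEventToNet], by simp⟩
    · rcases isTrace_trigger h₁ with ⟨-, ⟨⟩⟩ | ⟨b', rfl, hb⟩
      obtain rfl := hb b rfl
      obtain ⟨r₀?, h₃, rfl⟩ := isTrace_bind_ret_inv h₂
      obtain ⟨bs, hlen, hflat, hr⟩ := ih h₃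
      exact ⟨b :: bs, by simpa using hlen, by simp [hflat, implEventToNet],
        Option.forall_mem_map.2 fun a ha => by rw [hr a ha]⟩

theorem isTrace_send_bytes {c : ConnectionId} {bs : List Byte} {etr r?}
    (h : IsTrace (send_bytes c bs) etr r?) :
    ∃ j, implFlat etr = (bs.take j).map (.FromServer c) ∧ ∀ _ ∈ r?, bs.take j = bs := by
  induction bs generalizing etr r? with
  | nil => obtain ⟨rfl, -⟩ := isTrace_ret h; exact ⟨0, rfl, by simp⟩
  | cons b bs ih =>
    rcases isTrace_bind_inv h with ⟨h₁, rfl⟩ | ⟨_, _, etr₂, rfl, h₁, h₂⟩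
    · rcases isTrace_trigger h₁ with ⟨rfl, -⟩ | ⟨_, rfl, -⟩
      · exact ⟨0, rfl, by simp⟩
      · exact ⟨1, by simp [implEventToNet], by simp⟩
    · rcases isTrace_trigger h₁ with ⟨-, ⟨⟩⟩ | ⟨_, rfl, -⟩
      obtain ⟨j, hflat, hr⟩ := ih h₂
      exact ⟨j + 1, by simp [hflat, implEventToNet], fun u hu => by simp [hr u hu]⟩

theorem process_conn_of_recving {conn : Connection} (m : Message) (h : conn.state = .RECVING) :
    process_conn conn m =
      ITree.bind (implChoose (List.range (msgLen - conn.recvBuf.length + 1))) fun n =>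
        ITree.bind (recv_bytes conn.conn_id n) fun bs => ret (recvUpd conn bs m) := by
  simp only [process_conn, h]
  congr 1; funext n; congr 1; funext bs
  unfold recvUpd; split <;> simp only [h]

theorem process_conn_of_sending {conn : Connection} (m : Message) (h : conn.state = .SENDING) :
    process_conn conn m =
      ITree.bind (implChoose (List.range (conn.sendBuf.length + 1))) fun n =>
        ITree.bind (send_bytes conn.conn_id (conn.sendBuf.take n)) fun _ =>
          ret (sendUpd conn n, m) := by
  simp only [process_conn, h]
  congr 1; funext n; congr 1; funext _
  unfold sendUpd; split <;> simp only [h]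

theorem isTrace_process_conn_of_recving {conn : Connection} {m : Message} {etr r?}
    (hst : conn.state = .RECVING) (h : IsTrace (process_conn conn m) etr r?) :
    ∃ bs : List Byte, (conn.recvBuf.length + bs.length ≤ msgLen ∨ bs = []) ∧
      implFlat etr = bs.map (.ToServer conn.conn_id) ∧ ∀ v ∈ r?, v = recvUpd conn bs m := by
  rw [process_conn_of_recving m hst] at h
  rcases isTrace_bind_inv h with ⟨h₁, rfl⟩ | ⟨etr₁, n, etr₂, rfl, h₁, h₂⟩
  · exact ⟨[], .inr rfl, by simpa using (isTrace_implChoose h₁).1, by simp⟩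
  obtain ⟨hflat₁, hn⟩ := isTrace_implChoose h₁
  have hn := List.mem_range.1 (hn n rfl)
  obtain ⟨r₀?, h₃, rfl⟩ := isTrace_bind_ret_inv h₂
  obtain ⟨bs, hlen, hflat₂, hr⟩ := isTrace_recv_bytes h₃
  refine ⟨bs, ?_, by simp [hflat₁, hflat₂], ?_⟩
  · rcases Nat.eq_zero_or_pos bs.length with hbs | hbs
    · exact .inr (List.eq_nil_of_length_eq_zero hbs)
    · exact .inl (by omega)
  · exact Option.forall_mem_map.2 fun a ha => by rw [hr a ha]

theorem isTrace_process_conn_of_sending {conn : Connection} {m : Message} {etr r?}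
    (hst : conn.state = .SENDING) (h : IsTrace (process_conn conn m) etr r?) :
    ∃ n, implFlat etr = (conn.sendBuf.take n).map (.FromServer conn.conn_id) ∧
      ∀ v ∈ r?, v = (sendUpd conn n, m) := by
  rw [process_conn_of_sending m hst] at h
  rcases isTrace_bind_inv h with ⟨h₁, rfl⟩ | ⟨etr₁, n, etr₂, rfl, h₁, h₂⟩
  · exact ⟨0, by simpa using (isTrace_implChoose h₁).1, by simp⟩
  obtain ⟨r₀?, h₃, rfl⟩ := isTrace_bind_ret_inv h₂
  obtain ⟨j, hflat₂, hr⟩ := isTrace_send_bytes h₃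
  have hflat₁ := (isTrace_implChoose h₁).1
  cases r₀? with
  | none => exact ⟨min j n, by simp [hflat₁, hflat₂, List.take_take], by simp⟩
  | some u => exact ⟨n, by simp [hflat₁, hflat₂, hr u rfl], by simp⟩

def SimulatedBySteps (σ : ServerState) (t : ITree ImplE ServerState) : Prop :=
  ∀ etr r?, IsTrace t etr r? → ∃ σ', ServerSteps σ (implFlat etr) σ' ∧ ∀ a ∈ r?, σ' = a

theorem simulatedBySteps_accept (σ : ServerState) :
    SimulatedBySteps σ (ITree.bind accept_connection fun r =>
      match r with
      | some c => ret (c :: σ.1, σ.2)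
      | none => ret (σ.1, σ.2)) := by
  have hacc : accept_connection =
      ITree.bind (trigger ImplE.accept) fun r => ret (r.map newConnection) := by
    unfold accept_connection
    congr 1; funext r; cases r <;> rfl
  have hk : (fun r : Option Connection => (match r with
      | some c => ret (c :: σ.1, σ.2)
      | none => ret (σ.1, σ.2) : ITree ImplE ServerState)) =
      fun r => ret (r.elim σ fun c => (c :: σ.1, σ.2)) := by
    funext r; cases r <;> rfl
  intro etr r? h
  rw [hk, hacc] at h
  obtain ⟨r₁?, h₁, rfl⟩ := isTrace_bind_ret_inv h
  obtain ⟨r₀?, h₀, rfl⟩ := isTrace_bind_ret_inv h₁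
  rcases isTrace_trigger h₀ with ⟨rfl, rfl⟩ | ⟨_ | c, rfl, hr⟩
  · exact ⟨σ, .refl σ, by simp⟩
  · refine ⟨σ, by simpa [implEventToNet] using .refl σ, ?_⟩
    cases r₀? <;> simp_all
  · have hs := ServerSteps.step (.accept σ c) (.refl _)
    refine ⟨(newConnection c :: σ.1, σ.2), by simpa [implEventToNet] using hs, ?_⟩
    cases r₀? <;> simp_all

theorem simulatedBySteps_service (σ : ServerState) :
    SimulatedBySteps σ (ITree.bind (implChoose
        (σ.1.filter (has_conn_state .RECVING) ++ σ.1.filter (has_conn_state .SENDING))) fun c =>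
      ITree.bind (process_conn c σ.2) fun v => ret (serviceResult σ v)) := by
  intro etr r? h
  rcases isTrace_bind_inv h with ⟨h₁, rfl⟩ | ⟨etr₁, conn, etr₂, rfl, h₁, h₂⟩
  · exact ⟨σ, by simpa [(isTrace_implChoose h₁).1] using .refl σ, by simp⟩
  obtain ⟨hflat₁, hconn⟩ := isTrace_implChoose h₁
  obtain ⟨r₀?, h₃, rfl⟩ := isTrace_bind_ret_inv h₂
  have hsteps : ∃ v, ServerSteps σ (implFlat etr₂) (serviceResult σ v) ∧ ∀ v' ∈ r₀?, v' = v := by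
    simp only [List.mem_append, List.mem_filter, has_conn_state, decide_eq_true_eq] at hconn
    rcases hconn conn rfl with ⟨hmem, hst⟩ | ⟨hmem, hst⟩
    · obtain ⟨bs, hlen, hflat, hr⟩ := isTrace_process_conn_of_recving hst h₃
      exact ⟨_, hflat ▸ serverSteps_recv bs hmem hst hlen, hr⟩
    · obtain ⟨n, hflat, hr⟩ := isTrace_process_conn_of_sending hst h₃
      exact ⟨_, hflat ▸ serverSteps_send n hmem hst, hr⟩
  obtain ⟨v, hsteps, hr⟩ := hsteps
  exact ⟨_, by simpa [hflat₁] using hsteps, Option.forall_mem_map.2 fun v' hv => by rw [hr v' hv]⟩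

theorem simulatedBySteps_select_loop_body (σ : ServerState) :
    SimulatedBySteps σ (select_loop_body σ) := by
  intro etr r? h
  rw [select_loop_body, implOr] at h
  rcases isTrace_vis h with ⟨rfl, rfl⟩ | ⟨_ | _, etr, rfl, hk⟩
  · exact ⟨σ, .refl σ, by simp⟩
  · simpa [implEventToNet] using simulatedBySteps_service σ etr r? hk
  · simpa [implEventToNet] using simulatedBySteps_accept σ etr r? hk

theorem serverSteps_of_isTrace_impl_model {etr r?} (h : IsTrace impl_model etr r?) :
    ∃ σ, ServerSteps ([], zeros) (implFlat etr) σ := by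
  suffices ∀ {u etr}, IsLoopTrace select_loop_body u etr →
      ∀ σ, SimulatedBySteps σ u → ∃ σ', ServerSteps σ (implFlat etr) σ' from
    this (isLoopTrace_of_isTrace_loop h) _ (simulatedBySteps_select_loop_body _)
  intro u etr h
  induction h with
  | last h => exact fun σ hσ => (hσ _ _ h).imp fun _ h => h.1
  | iter h₁ _ ih =>
    intro σ hσ
    obtain ⟨σ', hsteps, hr⟩ := hσ _ _ h₁
    obtain rfl := hr _ rfl
    obtain ⟨σ'', hsteps'⟩ := ih σ' (simulatedBySteps_select_loop_body σ')
    exact ⟨σ'', by simpa using hsteps.append hsteps'⟩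

def specFlat (etr : List (ITree.EventE SpecE)) : NetworkTrace :=
  (etr.map specEventToNet).flatten

@[simp] theorem specFlat_nil : specFlat [] = [] := rfl

@[simp] theorem specFlat_cons (e : ITree.EventE SpecE) (etr : List (ITree.EventE SpecE)) :
    specFlat (e :: etr) = specEventToNet e ++ specFlat etr := rfl

@[simp] theorem specFlat_append (etr etr' : List (ITree.EventE SpecE)) :
    specFlat (etr ++ etr') = specFlat etr ++ specFlat etr' := by
  simp [specFlat]

inductive SpecStep : List ConnectionId × Message → NetworkTrace → List ConnectionId × Message → Prop
  | connect (conns : List ConnectionId) (m : Message) (c : ConnectionId) :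
      SpecStep (conns, m) [.NewConnection c] (c :: conns, m)
  | exchange {conns : List ConnectionId} {c : ConnectionId} (m msg : Message) :
      c ∈ conns →
      SpecStep (conns, m) (msg.1.map (.ToServer c) ++ m.1.map (.FromServer c)) (conns, msg)

theorem isTrace_specChoose {A : Type} {l : List A} {a : A} (h : a ∈ l) :
    ∃ etr, IsTrace (specChoose l) etr (some a) ∧ specFlat etr = [] := by
  induction l with
  | nil => cases h
  | cons x xs ih =>
    rw [specChoose, specOr]
    rcases List.mem_cons.1 h with rfl | h
    · exact ⟨[⟨Bool, .or, true⟩], .visStep _ true (.retEnd a), rfl⟩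
    · obtain ⟨etr, htr, hflat⟩ := ih h
      exact ⟨⟨Bool, .or, false⟩ :: etr, .visStep _ false htr, by simpa [specEventToNet]⟩

theorem SpecStep.isTrace {st st' : List ConnectionId × Message} {ds : NetworkTrace}
    (h : SpecStep st ds st') : ∃ etr, IsTrace (specStep st) etr (some st') ∧ specFlat etr = ds := by
  unfold specStep specOr
  cases h with
  | connect conns m c =>
    refine ⟨[⟨Bool, .or, true⟩, ⟨ConnectionId, .obs_connect, c⟩], .visStep _ true ?_, rfl⟩
    exact isTrace_bind_of_some (tr₂ := []) (isTrace_trigger_some _ c) (.retEnd _)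
  | @exchange conns c m msg hc =>
    obtain ⟨etr, htr, hflat⟩ := isTrace_specChoose hc
    refine ⟨⟨Bool, .or, false⟩ :: (etr ++ [⟨Message, .obs_msg_to_server c, msg⟩,
      ⟨Unit, .obs_msg_from_server c m, ()⟩]), .visStep _ false ?_, by simp [hflat, specEventToNet]⟩
    exact isTrace_bind_of_some htr <|
      isTrace_bind_of_some (tr₂ := [_]) (isTrace_trigger_some _ msg) <|
      isTrace_bind_of_some (tr₂ := []) (isTrace_trigger_some _ ()) (.retEnd _)

theorem is_spec_trace_linear_spec'_of_specStep {conns conns' : List ConnectionId} {m m' : Message}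
    {ds₀ ds : NetworkTrace} (h : SpecStep (conns, m) ds₀ (conns', m'))
    (hds : is_spec_trace (linear_spec' conns' m') ds) :
    is_spec_trace (linear_spec' conns m) (ds₀ ++ ds) := by
  obtain ⟨etr₀, htr₀, rfl⟩ := h.isTrace
  obtain ⟨etr, r?, htr, rfl⟩ := hds
  exact ⟨etr₀ ++ etr, r?, isTrace_loop_of_step htr₀ htr, by simp [specFlat]⟩

@[simp] theorem updateNs_same (ns : NetworkState) (c : ConnectionId) (v : ConnectionNetState) :
    updateNs ns c v c = v := by
  simp [updateNs]

@[simp] theorem updateNs_updateNs (ns : NetworkState) (c : ConnectionId)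
    (v w : ConnectionNetState) : updateNs (updateNs ns c v) c w = updateNs ns c w := by
  funext c'
  by_cases h : c' = c <;> simp [updateNs, h]

@[simp] theorem updateNs_self (ns : NetworkState) (c : ConnectionId) :
    updateNs ns c (ns c) = ns := by
  funext c'
  by_cases h : c' = c <;> simp [updateNs, h]

theorem server_transitions.append {ts ts' : NetworkTrace} {ns ns' ns'' : NetworkState}
    (h : server_transitions ts ns ns') (h' : server_transitions ts' ns' ns'') :
    server_transitions (ts ++ ts') ns ns'' := by
  induction h with
  | nil => exact h'
  | cons hs _ ih => exact .cons hs (ih h')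

theorem server_transitions.append_reordered {ts₀ ts tc : NetworkTrace} {ns ns' : NetworkState}
    (h : server_transitions ts₀ ns ns') (h' : network_reordered_ ns' ts tc) :
    network_reordered_ ns (ts₀ ++ ts) tc := by
  induction h with
  | nil => exact h'
  | cons hs _ ih => exact .server hs (ih h')

theorem server_transitions_toServer {ns : NetworkState} {c : ConnectionId} (bs rest : List Byte)
    (hst : (ns c).status = .PENDING ∨ (ns c).status = .ACCEPTED)
    (h : (ns c).toServer = bs ++ rest) :
    server_transitions (bs.map (.ToServer c)) ns
      (updateNs ns c { ns c with toServer := rest }) := by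
  induction bs generalizing ns with
  | nil =>
    have : ({ ns c with toServer := rest } : ConnectionNetState) = ns c := by
      rw [List.nil_append] at h; rw [← h]
    simpa [this] using .nil ns
  | cons b bs ih =>
    refine .cons ⟨hst, bs ++ rest, h, rfl⟩ ?_
    simpa using ih (ns := updateNs ns c { ns c with toServer := bs ++ rest })
      (by simpa using hst) (by simp)

theorem server_transitions_fromServer {ns : NetworkState} {c : ConnectionId} (bs : List Byte)
    (hst : (ns c).status = .ACCEPTED) :
    server_transitions (bs.map (.FromServer c)) ns
      (updateNs ns c { ns c with fromServer := (ns c).fromServer ++ bs }) := by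
  induction bs generalizing ns with
  | nil =>
    have : ({ ns c with fromServer := (ns c).fromServer ++ [] } : ConnectionNetState) = ns c := by
      rw [List.append_nil]
    simpa [this] using .nil ns
  | cons b bs ih =>
    refine .cons ⟨hst, rfl⟩ ?_
    simpa using ih (ns := updateNs ns c { ns c with fromServer := (ns c).fromServer ++ [b] })
      (by simpa using hst)

theorem server_transition.status_accepted {ev : NetworkEvent} {ns ns' : NetworkState}
    (h : server_transition ev ns ns') {c : ConnectionId} (hc : (ns c).status = .ACCEPTED) :
    (ns' c).status = .ACCEPTED := by
  cases ev with
  | NewConnection c' =>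
    obtain ⟨-, rfl⟩ := h
    simp only [updateNs]; split <;> simp_all
  | ToServer c' b =>
    obtain ⟨-, -, -, rfl⟩ := h
    simp only [updateNs]; split <;> simp_all
  | FromServer c' b =>
    obtain ⟨-, rfl⟩ := h
    simp only [updateNs]; split <;> simp_all

theorem client_transition.status_accepted {ev : NetworkEvent} {ns ns' : NetworkState}
    (h : client_transition ev ns ns') {c : ConnectionId} (hc : (ns c).status = .ACCEPTED) :
    (ns' c).status = .ACCEPTED := by
  cases ev with
  | NewConnection c' =>
    obtain ⟨hclosed, rfl⟩ := h
    simp only [updateNs]; split <;> simp_all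
  | ToServer c' b =>
    obtain ⟨-, rfl⟩ := h
    simp only [updateNs]; split <;> simp_all
  | FromServer c' b =>
    obtain ⟨-, -, -, rfl⟩ := h
    simp only [updateNs]; split <;> simp_all

def Connection.WellFormed (conn : Connection) : Prop :=
  (conn.state = .RECVING ∧ conn.recvBuf.length < msgLen ∧ conn.sendBuf = []) ∨
    (conn.state = .SENDING ∧ conn.recvBuf = [] ∧ conn.sendBuf ≠ [])

theorem Connection.WellFormed.live {conn : Connection} (h : conn.WellFormed) :
    conn.state = .RECVING ∨ conn.state = .SENDING :=
  h.imp And.left And.left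

theorem Connection.WellFormed.of_recving {conn : Connection} (h : conn.WellFormed)
    (hst : conn.state = .RECVING) : conn.recvBuf.length < msgLen ∧ conn.sendBuf = [] :=
  (h.resolve_right fun h' => by simp [hst] at h').2

theorem Connection.WellFormed.of_sending {conn : Connection} (h : conn.WellFormed)
    (hst : conn.state = .SENDING) : conn.recvBuf = [] ∧ conn.sendBuf ≠ [] :=
  (h.resolve_left fun h' => by simp [hst] at h').2

theorem wellFormed_newConnection (c : ConnectionId) : (newConnection c).WellFormed :=
  .inl ⟨rfl, by simp [newConnection, msgLen], rfl⟩

theorem Message.val_ne_nil (m : Message) : m.1 ≠ [] := fun h => by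
  simpa [h, msgLen] using m.2

theorem wellFormed_sendUpd {conn : Connection} (h : conn.WellFormed)
    (hst : conn.state = .SENDING) (n : ℕ) : (sendUpd conn n).WellFormed := by
  obtain ⟨hrecv, -⟩ := h.of_sending hst
  unfold sendUpd
  split
  · exact .inl ⟨rfl, by simp [hrecv, msgLen], rfl⟩
  · next hc => exact .inr ⟨hst, hrecv, by simpa using hc⟩

theorem replace_when_liveWithId {l : List Connection} (cid : ConnectionId) (conn' : Connection)
    (hl : ∀ x ∈ l, x.state = .RECVING ∨ x.state = .SENDING) :
    replace_when (liveWithId cid) conn' l =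
      l.map fun x => if x.conn_id = cid then conn' else x := by
  refine List.map_congr_left fun x hx => ?_
  rcases hl x hx with h | h <;> simp [liveWithId, has_conn_state, h]

def connOf (l : List Connection) (cid : ConnectionId) : Option Connection :=
  l.find? (·.conn_id = cid)

theorem connOf_cons (x : Connection) (l : List Connection) (cid : ConnectionId) :
    connOf (x :: l) cid = if x.conn_id = cid then some x else connOf l cid := by
  by_cases h : x.conn_id = cid <;> simp [connOf, h]

theorem connOf_eq_none {l : List Connection} {cid : ConnectionId}
    (h : ∀ x ∈ l, x.conn_id ≠ cid) : connOf l cid = none :=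
  List.find?_eq_none.2 fun x hx => by simpa using h x hx

theorem connOf_of_mem {l : List Connection} {conn : Connection}
    (hl : (l.map Connection.conn_id).Nodup) (h : conn ∈ l) : connOf l conn.conn_id = some conn := by
  induction l with
  | nil => cases h
  | cons x xs ih =>
    rw [List.map_cons, List.nodup_cons] at hl
    rw [connOf_cons]
    rcases List.mem_cons.1 h with rfl | h
    · simp
    · have : x.conn_id ≠ conn.conn_id := fun hx => hl.1 (hx ▸ List.mem_map_of_mem h)
      simp [this, ih hl.2 h]

theorem connOf_map_replace_of_ne {l : List Connection} {c cid : ConnectionId} {conn' : Connection}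
    (hc : cid ≠ c) (hid : conn'.conn_id = c) :
    connOf (l.map fun x => if x.conn_id = c then conn' else x) cid = connOf l cid := by
  induction l with
  | nil => rfl
  | cons x xs ih =>
    simp only [List.map_cons, connOf_cons]
    by_cases hx : x.conn_id = c
    · simp [hx, hid, Ne.symm hc, ih]
    · simp [hx, ih]

theorem connOf_map_replace {l : List Connection} {c : ConnectionId} {conn' : Connection}
    (cid : ConnectionId) (h : c ∈ l.map Connection.conn_id) (hid : conn'.conn_id = c) :
    connOf (l.map fun x => if x.conn_id = c then conn' else x) cid =
      if cid = c then some conn' else connOf l cid := by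
  by_cases hc : cid = c
  · subst hc
    induction l with
    | nil => cases h
    | cons x xs ih =>
      simp only [List.map_cons, connOf_cons]
      by_cases hx : x.conn_id = cid
      · simp [hx, hid]
      · simpa [hx] using ih ((List.mem_cons.1 h).resolve_left fun h => hx h.symm)
  · rw [if_neg hc, connOf_map_replace_of_ne hc hid]

def specConnState (conn? : Option Connection) (s : ConnectionNetState) : ConnectionNetState :=
  conn?.elim s fun conn =>
    { s with toServer := conn.recvBuf ++ s.toServer, fromServer := s.fromServer ++ conn.sendBuf }

def specNetState (l : List Connection) (ns : NetworkState) : NetworkState := fun cid =>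
  specConnState (connOf l cid) (ns cid)

theorem specConnState_status (conn? : Option Connection) (s : ConnectionNetState) :
    (specConnState conn? s).status = s.status := by
  cases conn? <;> rfl

theorem specNetState_updateNs {l l' : List Connection} {c : ConnectionId}
    {conn? : Option Connection}
    (h : ∀ cid, connOf l' cid = if cid = c then conn? else connOf l cid)
    (ns : NetworkState) (v : ConnectionNetState) :
    specNetState l' (updateNs ns c v) = updateNs (specNetState l ns) c (specConnState conn? v) := by
  funext cid
  by_cases hc : cid = c <;> simp [specNetState, updateNs, h, hc]

theorem client_transition_specNetState (l : List Connection) {ev : NetworkEvent}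
    {ns ns' : NetworkState} (h : client_transition ev ns ns') :
    client_transition ev (specNetState l ns) (specNetState l ns') := by
  have key (c : ConnectionId) (v : ConnectionNetState) :=
    specNetState_updateNs (l := l) (l' := l) (c := c) (conn? := connOf l c)
      (fun cid => by split <;> simp_all) ns v
  cases ev with
  | NewConnection c =>
    obtain ⟨hst, rfl⟩ := h
    refine ⟨by rwa [specNetState, specConnState_status], ?_⟩
    rw [key, specNetState]
    cases connOf l c <;> rfl
  | ToServer c b =>
    obtain ⟨hst, rfl⟩ := h
    refine ⟨by rwa [specNetState, specConnState_status], ?_⟩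
    rw [key, specNetState]
    cases connOf l c <;> simp [specConnState]
  | FromServer c b =>
    obtain ⟨hst, rest, hhead, rfl⟩ := h
    refine ⟨by rwa [specNetState, specConnState_status], ?_⟩
    rw [key, specNetState]
    cases connOf l c with
    | none => exact ⟨rest, hhead, rfl⟩
    | some conn => exact ⟨rest ++ conn.sendBuf, by simp [specConnState, hhead], rfl⟩

structure SimInv (l : List Connection) (ns : NetworkState) (conns : List ConnectionId) : Prop where
  nodup : (l.map Connection.conn_id).Nodup
  opened : ∀ conn ∈ l, conn.conn_id ∈ conns
  accepted : ∀ conn ∈ l, (ns conn.conn_id).status = .ACCEPTED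
  wellFormed : ∀ conn ∈ l, conn.WellFormed

theorem SimInv.of_accepted {l : List Connection} {ns ns' : NetworkState} {conns : List ConnectionId}
    (h : SimInv l ns conns)
    (hacc : ∀ c, (ns c).status = .ACCEPTED → (ns' c).status = .ACCEPTED) : SimInv l ns' conns :=
  ⟨h.nodup, h.opened, fun conn hc => hacc _ (h.accepted conn hc), h.wellFormed⟩

theorem SimInv.serviceResult_eq {σ : ServerState} {ns : NetworkState} {conns : List ConnectionId}
    (h : SimInv σ.1 ns conns) (v : Connection × Message) :
    serviceResult σ v = (σ.1.map fun x => if x.conn_id = v.1.conn_id then v.1 else x, v.2) := by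
  rw [serviceResult, replace_when_liveWithId _ _ fun x hx => (h.wellFormed x hx).live]

theorem SimInv.replace {σ : ServerState} {ns ns' : NetworkState} {conns : List ConnectionId}
    {conn : Connection} {v : Connection × Message} (h : SimInv σ.1 ns conns) (hmem : conn ∈ σ.1)
    (hid : v.1.conn_id = conn.conn_id) (hwf : v.1.WellFormed)
    (hacc : ∀ c, (ns c).status = .ACCEPTED → (ns' c).status = .ACCEPTED) :
    SimInv (serviceResult σ v).1 ns' conns := by
  obtain ⟨conn', m⟩ := v
  rw [h.serviceResult_eq]
  have hids : (σ.1.map fun x => if x.conn_id = conn'.conn_id then conn' else x).map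
      Connection.conn_id = σ.1.map Connection.conn_id := by
    simp only [List.map_map]
    refine List.map_congr_left fun x _ => ?_
    simp only [Function.comp_apply]
    split <;> simp_all
  have hmem' : ∀ y ∈ σ.1.map fun x => if x.conn_id = conn'.conn_id then conn' else x,
      y = conn' ∨ y ∈ σ.1 := by
    simp only [List.mem_map]
    rintro _ ⟨x, hx, rfl⟩
    split <;> simp [hx]
  refine ⟨hids ▸ h.nodup, fun y hy => ?_, fun y hy => ?_, fun y hy => ?_⟩ <;>
    rcases hmem' y hy with rfl | hy
  · exact hid ▸ h.opened conn hmem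
  · exact h.opened y hy
  · exact hacc _ (hid ▸ h.accepted conn hmem)
  · exact hacc _ (h.accepted y hy)
  · exact hwf
  · exact h.wellFormed y hy

theorem SimInv.specNetState_of_mem {σ : ServerState} {ns : NetworkState}
    {conns : List ConnectionId} {conn : Connection} (h : SimInv σ.1 ns conns) (hmem : conn ∈ σ.1) :
    specNetState σ.1 ns conn.conn_id = specConnState (some conn) (ns conn.conn_id) := by
  rw [specNetState, connOf_of_mem h.nodup hmem]

theorem SimInv.specNetState_serviceResult {σ : ServerState} {ns : NetworkState}
    {conns : List ConnectionId} {conn : Connection} {v : Connection × Message}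
    (h : SimInv σ.1 ns conns) (hmem : conn ∈ σ.1) (hid : v.1.conn_id = conn.conn_id)
    (s : ConnectionNetState) :
    specNetState (serviceResult σ v).1 (updateNs ns conn.conn_id s) =
      updateNs (specNetState σ.1 ns) conn.conn_id (specConnState (some v.1) s) := by
  rw [h.serviceResult_eq, hid]
  exact specNetState_updateNs (fun cid => connOf_map_replace cid (List.mem_map_of_mem hmem) hid) _ _

theorem map_replace_self {l : List Connection} {conn : Connection}
    (hl : (l.map Connection.conn_id).Nodup) (h : conn ∈ l) :
    (l.map fun x => if x.conn_id = conn.conn_id then conn else x) = l := by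
  refine (List.map_congr_left fun x hx => ?_).trans (List.map_id l)
  split
  · next hx' => exact (List.inj_on_of_nodup_map hl hx h hx').symm
  · rfl

theorem ServerIdleStep.eq {σ σ' : ServerState} {ns : NetworkState} {conns : List ConnectionId}
    (h : ServerIdleStep σ σ') (hinv : SimInv σ.1 ns conns) : σ' = σ := by
  cases h with
  | @recv conn hmem hst =>
    have : recvUpd conn [] σ.2 = (conn, σ.2) := by
      simp [recvUpd, ((hinv.wellFormed conn hmem).of_recving hst).1.ne]
    rw [this, hinv.serviceResult_eq, map_replace_self hinv.nodup hmem]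
  | @send conn hmem hst =>
    have : sendUpd conn 0 = conn := by
      simp [sendUpd, ((hinv.wellFormed conn hmem).of_sending hst).2]
    rw [this, hinv.serviceResult_eq, map_replace_self hinv.nodup hmem]

theorem ServerSteps.cons_inv {σ σ'' : ServerState} {ev : NetworkEvent} {ts : NetworkTrace}
    {ns : NetworkState} {conns : List ConnectionId} (h : ServerSteps σ (ev :: ts) σ'')
    (hinv : SimInv σ.1 ns conns) : ∃ σ', ServerStep σ ev σ' ∧ ServerSteps σ' ts σ'' := by
  generalize hts : ev :: ts = ts' at h
  induction h with
  | refl => cases hts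
  | idle hi _ ih => obtain rfl := hi.eq hinv; exact ih hinv hts
  | step hs h => cases hts; exact ⟨_, hs, h⟩

def SpecMatchesStep (σ : ServerState) (ns : NetworkState) (conns : List ConnectionId)
    (σ' : ServerState) (ns' : NetworkState) : Prop :=
  ∃ ds₀ conns', server_transitions ds₀ (specNetState σ.1 ns) (specNetState σ'.1 ns') ∧
    SimInv σ'.1 ns' conns' ∧
    ∀ ds, is_spec_trace (linear_spec' conns' σ'.2) ds →
      is_spec_trace (linear_spec' conns σ.2) (ds₀ ++ ds)

theorem specMatchesStep_of_stutter {σ σ' : ServerState} {ns ns' : NetworkState}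
    {conns : List ConnectionId} (hσ : σ'.2 = σ.2)
    (hns : specNetState σ'.1 ns' = specNetState σ.1 ns) (hinv : SimInv σ'.1 ns' conns) :
    SpecMatchesStep σ ns conns σ' ns' :=
  ⟨[], conns, hns ▸ .nil _, hinv, fun _ hds => hσ ▸ hds⟩

theorem specMatchesStep_accept {σ : ServerState} {ns ns' : NetworkState}
    {conns : List ConnectionId} {c : ConnectionId} (hinv : SimInv σ.1 ns conns)
    (h : server_transition (.NewConnection c) ns ns') :
    SpecMatchesStep σ ns conns (newConnection c :: σ.1, σ.2) ns' := by
  have hacc c' := h.status_accepted (c := c')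
  obtain ⟨hpending, rfl⟩ := h
  have hfresh : ∀ x ∈ σ.1, x.conn_id ≠ c := fun x hx hxc => by
    simpa [hxc, hpending] using hinv.accepted x hx
  have hns : specNetState (newConnection c :: σ.1)
      (updateNs ns c { ns c with status := .ACCEPTED }) =
      updateNs (specNetState σ.1 ns) c { specNetState σ.1 ns c with status := .ACCEPTED } := by
    rw [specNetState_updateNs (l := σ.1) (conn? := some (newConnection c))
      fun cid => by simp [connOf_cons, newConnection, eq_comm]]
    simp [specNetState, connOf_eq_none hfresh, specConnState, newConnection]
  refine ⟨[.NewConnection c], c :: conns,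
    .cons ⟨by rwa [specNetState, specConnState_status], hns⟩ (.nil _), ⟨?_, ?_, ?_, ?_⟩,
    fun _ hds => is_spec_trace_linear_spec'_of_specStep (.connect _ _ c) hds⟩
  · exact List.nodup_cons.2 ⟨by simpa [newConnection] using hfresh, hinv.nodup⟩
  · exact List.forall_mem_cons.2 ⟨.head _, fun x hx => .tail _ (hinv.opened x hx)⟩
  · exact List.forall_mem_cons.2 ⟨by simp [newConnection], fun x hx => hacc _ (hinv.accepted x hx)⟩
  · exact List.forall_mem_cons.2 ⟨wellFormed_newConnection c, hinv.wellFormed⟩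

theorem specMatchesStep_recv_of_incomplete {σ : ServerState} {ns ns' : NetworkState}
    {conns : List ConnectionId} {conn : Connection} {b : Byte} (hinv : SimInv σ.1 ns conns)
    (hmem : conn ∈ σ.1) (hst : conn.state = .RECVING) (hc : (conn.recvBuf ++ [b]).length ≠ msgLen)
    (h : server_transition (.ToServer conn.conn_id b) ns ns') :
    SpecMatchesStep σ ns conns
      (serviceResult σ ({ conn with recvBuf := conn.recvBuf ++ [b] }, σ.2)) ns' := by
  have hacc c' := h.status_accepted (c := c')
  obtain ⟨-, rest, hhead, rfl⟩ := h
  obtain ⟨hlen, hsend⟩ := (hinv.wellFormed conn hmem).of_recving hst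
  have hwf : Connection.WellFormed { conn with recvBuf := conn.recvBuf ++ [b] } :=
    .inl ⟨hst, by simp only [List.length_append, List.length_singleton] at hc ⊢; omega, hsend⟩
  refine specMatchesStep_of_stutter rfl ?_ (hinv.replace hmem rfl hwf hacc)
  rw [hinv.specNetState_serviceResult hmem rfl, ← updateNs_self (specNetState σ.1 ns) conn.conn_id,
    updateNs_updateNs, hinv.specNetState_of_mem hmem]
  simp [specConnState, hhead]

theorem specMatchesStep_recv_of_complete {σ : ServerState} {ns ns' : NetworkState}
    {conns : List ConnectionId} {conn : Connection} {b : Byte} (hinv : SimInv σ.1 ns conns)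
    (hmem : conn ∈ σ.1) (hst : conn.state = .RECVING) (hc : (conn.recvBuf ++ [b]).length = msgLen)
    (h : server_transition (.ToServer conn.conn_id b) ns ns') :
    SpecMatchesStep σ ns conns (serviceResult σ
      ({ conn with state := .SENDING, recvBuf := [], sendBuf := σ.2.1 }, ⟨_, hc⟩)) ns' := by
  have hacc c' := h.status_accepted (c := c')
  obtain ⟨-, rest, hhead, rfl⟩ := h
  have hsend := ((hinv.wellFormed conn hmem).of_recving hst).2
  have hconn : specNetState σ.1 ns conn.conn_id =
      { ns conn.conn_id with toServer := (conn.recvBuf ++ [b]) ++ rest } := by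
    simp [hinv.specNetState_of_mem hmem, specConnState, hhead, hsend]
  have hacc₀ : (specNetState σ.1 ns conn.conn_id).status = .ACCEPTED := by
    simp [hconn, hinv.accepted conn hmem]
  have hto := server_transitions_toServer _ rest (.inr hacc₀) (by rw [hconn])
  have hfrom := server_transitions_fromServer (c := conn.conn_id) σ.2.1
    (ns := updateNs (specNetState σ.1 ns) conn.conn_id
      { specNetState σ.1 ns conn.conn_id with toServer := rest }) (by simpa using hacc₀)
  refine ⟨_, conns, ?_, hinv.replace hmem rfl (.inr ⟨rfl, rfl, σ.2.val_ne_nil⟩) hacc,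
    fun _ hds => is_spec_trace_linear_spec'_of_specStep
      (.exchange σ.2 ⟨_, hc⟩ (hinv.opened conn hmem)) hds⟩
  rw [hinv.specNetState_serviceResult hmem rfl]
  convert hto.append hfrom using 1
  simp [hconn, specConnState]

theorem specMatchesStep_recv {σ : ServerState} {ns ns' : NetworkState}
    {conns : List ConnectionId} {conn : Connection} {b : Byte} (hinv : SimInv σ.1 ns conns)
    (hmem : conn ∈ σ.1) (hst : conn.state = .RECVING)
    (h : server_transition (.ToServer conn.conn_id b) ns ns') :
    SpecMatchesStep σ ns conns (serviceResult σ (recvUpd conn [b] σ.2)) ns' := by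
  by_cases hc : (conn.recvBuf ++ [b]).length = msgLen
  · rw [recvUpd, dif_pos hc]
    exact specMatchesStep_recv_of_complete hinv hmem hst hc h
  · rw [recvUpd, dif_neg hc]
    exact specMatchesStep_recv_of_incomplete hinv hmem hst hc h

theorem specMatchesStep_send {σ : ServerState} {ns ns' : NetworkState}
    {conns : List ConnectionId} {conn : Connection} {b : Byte} {rest : List Byte}
    (hinv : SimInv σ.1 ns conns) (hmem : conn ∈ σ.1) (hst : conn.state = .SENDING)
    (hbuf : conn.sendBuf = b :: rest) (h : server_transition (.FromServer conn.conn_id b) ns ns') :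
    SpecMatchesStep σ ns conns (serviceResult σ (sendUpd conn 1, σ.2)) ns' := by
  have hacc c' := h.status_accepted (c := c')
  obtain ⟨-, rfl⟩ := h
  refine specMatchesStep_of_stutter rfl ?_ (hinv.replace hmem (sendUpd_conn_id conn 1)
    (wellFormed_sendUpd (hinv.wellFormed conn hmem) hst 1) hacc)
  rw [hinv.specNetState_serviceResult hmem (sendUpd_conn_id conn 1),
    ← updateNs_self (specNetState σ.1 ns) conn.conn_id, updateNs_updateNs,
    hinv.specNetState_of_mem hmem]
  simp [specConnState, sendUpd_recvBuf, sendUpd_sendBuf, hbuf]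

theorem specMatchesStep_of_serverStep {σ σ' : ServerState} {ns ns' : NetworkState}
    {conns : List ConnectionId} {ev : NetworkEvent} (hinv : SimInv σ.1 ns conns)
    (hstep : ServerStep σ ev σ') (h : server_transition ev ns ns') :
    SpecMatchesStep σ ns conns σ' ns' := by
  cases hstep with
  | accept => exact specMatchesStep_accept hinv h
  | recv b hmem hst => exact specMatchesStep_recv hinv hmem hst h
  | send hmem hst hbuf => exact specMatchesStep_send hinv hmem hst hbuf h

theorem exists_spec_trace_of_network_reordered_ {ns : NetworkState} {ts tc : NetworkTrace}
    (h : network_reordered_ ns ts tc) {σ σ'' : ServerState} {conns : List ConnectionId}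
    (hsteps : ServerSteps σ ts σ'') (hinv : SimInv σ.1 ns conns) :
    ∃ ds, is_spec_trace (linear_spec' conns σ.2) ds ∧
      network_reordered_ (specNetState σ.1 ns) ds tc := by
  induction h generalizing σ conns with
  | nil => exact ⟨[], ⟨[], none, .nil _, rfl⟩, .nil _⟩
  | client hcl _ ih =>
    obtain ⟨ds, hds, hreord⟩ := ih hsteps (hinv.of_accepted fun _ => hcl.status_accepted)
    exact ⟨ds, hds, .client (client_transition_specNetState σ.1 hcl) hreord⟩
  | server hsv _ ih =>
    obtain ⟨σ', hstep, hsteps'⟩ := hsteps.cons_inv hinv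
    obtain ⟨ds₀, conns', htrans, hinv', hspec⟩ := specMatchesStep_of_serverStep hinv hstep hsv
    obtain ⟨ds, hds, hreord⟩ := ih hsteps' hinv'
    exact ⟨ds₀ ++ ds, hspec ds hds, htrans.append_reordered hreord⟩

/-- The implementation model network-refines the linear
specification: any network trace that clients can observe from `impl_model`
over the network could also have been produced by `linear_spec`. -/
theorem impl_model_network_refines_linear_spec :
    ∀ tr : NetworkTrace,
      (∃ ts : NetworkTrace, is_impl_trace impl_model ts ∧ network_reordered ts tr) →
      (∃ ds : NetworkTrace, is_spec_trace linear_spec ds ∧ network_reordered ds tr) := by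
  rintro tr ⟨_, ⟨etr, r?, htr, rfl⟩, hreord⟩
  obtain ⟨σ, hsteps⟩ := serverSteps_of_isTrace_impl_model htr
  have hinit : specNetState [] initial_ns = initial_ns := rfl
  obtain ⟨ds, hds, hreord'⟩ := exists_spec_trace_of_network_reordered_ hreord hsteps
    (conns := []) ⟨.nil, nofun, nofun, nofun⟩
  rw [hinit] at hreord'
  exact ⟨ds, hds, hreord'⟩
end

section
/- Proof rule for advancing the specification at a linearization point (nrefines_network_transition_): let s be a reasoning state, spec' an itree specE Unit, ns' a network_state, impl an itree implE Unit, and dtr a network trace. Suppose (i) for every trace dtr', if is_spec_trace spec' dtr' then is_spec_trace (get_spec s) (dtr ++ dtr'); (ii) server_transitions dtr (get_ns s) ns', i.e., the server side of the network transition system can take the sequence of steps labeled by dtr from state get_ns s to state ns'; and (iii) nrefines_ z (set_ns ns' (set_spec spec' s)) impl. Then nrefines_ z s impl. -/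
theorem server_transitions.network_reordered_append {dtr ts tc : NetworkTrace}
    {ns ns' : NetworkState} (h : server_transitions dtr ns ns')
    (hreord : network_reordered_ ns' ts tc) : network_reordered_ ns (dtr ++ ts) tc := by
  induction h with
  | nil => exact hreord
  | cons hstep _ ih => exact network_reordered_.server hstep (ih hreord)

/-- Proof rule for advancing the specification at a linearization
point: if every trace of `spec'` prefixed with `dtr` is a trace of `get_spec s`,
the server side of the network can take the steps labeled by `dtr` from
`get_ns s` to `ns'`, and `impl` satisfies `nrefines_` in the updated state, then
`impl` satisfies `nrefines_` in `s`. -/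
theorem nrefines_network_transition_ (z : ℕ) (s : SState) (spec' : ITree SpecE Unit)
    (ns' : NetworkState) (impl : ITree ImplE Unit) (dtr : NetworkTrace)
    (hspec : ∀ dtr' : NetworkTrace,
        is_spec_trace spec' dtr' → is_spec_trace s.get_spec (dtr ++ dtr'))
    (htrans : server_transitions dtr s.get_ns ns')
    (hrest : nrefines_ z (set_ns ns' (set_spec spec' s)) impl) :
    nrefines_ z s impl := by
  intro tr htr
  obtain ⟨dstr, hreord, hdstr⟩ := hrest tr htr
  exact ⟨dtr ++ dstr, htrans.network_reordered_append hreord, hspec dstr hdstr⟩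
end
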